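/- Let A be a finite nonempty set, X the simplex in ℝ^A with interior X°, and let payoffs be given by random matching: v(x) = M·x for a fixed real matrix M indexed by A × A. Let h be twice continuously differentiable on an open set containing X, with Hessian H(y) positive definite at each y ∈ X°. Let x : [0,∞) → X° be differentiable with x'(t) = V(x(t)), where V(y) is the H(y)-projection of H(y)⁻¹ v(y) onto ℝ₀^A = {z : ∑_α z_α = 0}, and suppose the trajectory {x(t) : t ≥ 0} is contained in a compact subset of X°. Then the time-averaged trajectory x̄(t) = (1/t) ∫₀ᵗ x(s) ds converges to the set of Nash equilibria of v: dist(x̄(t), {x* ∈ X : v(x*)·(x − x*) ≤ 0 for all x ∈ X}) → 0 as t → ∞. -/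

import Mathlib

/-!
Along the trajectory the projection condition says that `H(x) x' - M x` is a constant vector, so
`∂_α h(x(t)) - ∂_β h(x(t))` has derivative `(M x(t))_α - (M x(t))_β`. Integrating, and bounding
`∇h` on the compact set `K`, the payoff differences at the time average `x̄(t)` are `O(1/t)`.
As the simplex is compact, `x̄(t)` therefore approaches the points of the simplex at which all
payoffs are equal, and these are Nash equilibria.
-/


open Matrix Filter

noncomputable section

/-- The relative interior of the simplex (all coordinates positive, summing to one). -/
def intSimplex (A : Type*) [Fintype A] : Set (A → ℝ) :=
  {x | (∀ α, 0 < x α) ∧ (∑ α, x α) = 1}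

/-- The quadratic form `wᵀ G w = ‖w‖_G²` associated to a matrix `G`. -/
def qform {A : Type*} [Fintype A] (G : Matrix A A ℝ) (w : A → ℝ) : ℝ :=
  w ⬝ᵥ G.mulVec w

/-- `V` is the `G`-projection of `w` onto `C`. -/
def IsGProj {A : Type*} [Fintype A] (G : Matrix A A ℝ) (C : Set (A → ℝ))
    (w V : A → ℝ) : Prop :=
  V ∈ C ∧ ∀ z ∈ C, qform G (w - V) ≤ qform G (w - z)

/-- The Hessian matrix of `h` at `y`. -/
def hessMat {A : Type*} [Fintype A] [DecidableEq A] (h : (A → ℝ) → ℝ) (y : A → ℝ) :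
    Matrix A A ℝ :=
  Matrix.of fun α β => fderiv ℝ (fderiv ℝ h) y (Pi.single α 1) (Pi.single β 1)

open Set Topology

def pairDiff (A : Type*) : (A → ℝ) →L[ℝ] (A × A → ℝ) :=
  ContinuousLinearMap.pi fun p =>
    ContinuousLinearMap.proj (R := ℝ) (φ := fun _ : A => ℝ) p.1 - ContinuousLinearMap.proj p.2

@[simp]
lemma pairDiff_apply {A : Type*} (w : A → ℝ) (p : A × A) : pairDiff A w p = w p.1 - w p.2 :=
  rfl

section Projection

variable {A : Type*} [Fintype A]

lemma dotProduct_eq_zero_of_pairDiff_eq_zero {p z : A → ℝ} (hp : pairDiff A p = 0)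
    (hz : ∑ α, z α = 0) : p ⬝ᵥ z = 0 := by
  cases isEmpty_or_nonempty A with
  | inl _ => simp [dotProduct]
  | inr _ =>
    obtain ⟨α₀⟩ := ‹Nonempty A›
    have hconst (α : A) : p α = p α₀ := sub_eq_zero.1 (congrFun hp (α, α₀))
    simp only [dotProduct, hconst, ← Finset.mul_sum, hz, mul_zero]

lemma IsGProj.dotProduct_mulVec_eq_zero {G : Matrix A A ℝ} (hG : G.IsSymm) {C : Set (A → ℝ)}
    {w V z : A → ℝ} (hP : IsGProj G C w V) (hz : ∀ t : ℝ, V + t • z ∈ C) :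
    (w - V) ⬝ᵥ G *ᵥ z = 0 := by
  have hcomm : z ⬝ᵥ G *ᵥ (w - V) = (w - V) ⬝ᵥ G *ᵥ z := by
    rw [dotProduct_mulVec, ← mulVec_transpose, hG.eq, dotProduct_comm]
  have hquad : ∀ t : ℝ,
      0 ≤ (z ⬝ᵥ G *ᵥ z) * (t * t) + (-2 * ((w - V) ⬝ᵥ G *ᵥ z)) * t + 0 := by
    intro t
    have hle := hP.2 _ (hz t)
    rw [show w - (V + t • z) = (w - V) - t • z by abel] at hle
    generalize w - V = u at hle hcomm ⊢
    simp only [qform, mulVec_sub, mulVec_smul, dotProduct_sub, sub_dotProduct,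
      dotProduct_smul, smul_dotProduct, smul_eq_mul] at hle
    linear_combination hle - t * hcomm
  have := discrim_le_zero hquad
  rw [discrim] at this
  nlinarith [sq_nonneg ((w - V) ⬝ᵥ G *ᵥ z)]

variable [DecidableEq A]

lemma IsGProj.pairDiff_mulVec {G : Matrix A A ℝ} (hG : G.PosDef) {w V : A → ℝ}
    (hP : IsGProj G {z | ∑ α, z α = 0} (G⁻¹ *ᵥ w) V) : pairDiff A (G *ᵥ V) = pairDiff A w := by
  funext ⟨α, β⟩
  have hsymm : G.IsSymm := isHermitian_iff_isSymm.1 hG.isHermitian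
  set z : A → ℝ := Pi.single α 1 - Pi.single β 1
  have hline : ∀ t : ℝ, V + t • z ∈ {z : A → ℝ | ∑ α, z α = 0} := by
    intro t
    have hV : ∑ γ, V γ = 0 := hP.1
    simp [z, Finset.sum_add_distrib, ← Finset.mul_sum, Finset.sum_sub_distrib, hV]
  have horth := hP.dotProduct_mulVec_eq_zero hsymm hline
  rw [dotProduct_mulVec, ← mulVec_transpose, hsymm.eq, mulVec_sub, mulVec_mulVec,
    mul_nonsing_inv _ ((isUnit_iff_isUnit_det G).1 hG.isUnit), one_mulVec] at horth
  simp only [z, dotProduct_sub, dotProduct_single, mul_one, Pi.sub_apply] at horth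
  simp only [pairDiff_apply]
  linarith

end Projection

section Hessian

variable {A : Type*} [Fintype A] [DecidableEq A] {h : (A → ℝ) → ℝ}

def partials (h : (A → ℝ) → ℝ) (y : A → ℝ) : A → ℝ :=
  fun γ => fderiv ℝ h y (Pi.single γ 1)

lemma ContDiffOn.continuousOn_partials {U : Set (A → ℝ)} (hh : ContDiffOn ℝ 2 h U)
    (hU : IsOpen U) : ContinuousOn (partials h) U :=
  continuousOn_pi.2 fun _ =>
    (hh.continuousOn_fderiv_of_isOpen hU (by simp)).clm_apply continuousOn_const

lemma hessMat_mulVec_apply {y : A → ℝ} (hh : ContDiffAt ℝ 2 h y) (v : A → ℝ) (γ : A) :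
    (hessMat h y *ᵥ v) γ = fderiv ℝ (fderiv ℝ h) y v (Pi.single γ 1) := by
  conv_rhs => rw [hh.isSymmSndFDerivAt (by simp) v, pi_eq_sum_univ' v]
  simp [mulVec, dotProduct, hessMat, mul_comm]

lemma HasDerivWithinAt.partials {x : ℝ → A → ℝ} {v : A → ℝ} {s : Set ℝ} {t : ℝ}
    (hh : ContDiffAt ℝ 2 h (x t)) (hx : HasDerivWithinAt x v s t) :
    HasDerivWithinAt (fun t => partials h (x t)) (hessMat h (x t) *ᵥ v) s t := by
  have hD : HasFDerivAt (fderiv ℝ h) (fderiv ℝ (fderiv ℝ h) (x t)) (x t) :=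
    ((hh.fderiv_right (m := 1) (by norm_num)).differentiableAt (by norm_num)).hasFDerivAt
  refine hasDerivWithinAt_pi.2 fun γ => ?_
  rw [hessMat_mulVec_apply hh]
  exact (hD.comp_hasDerivWithinAt t hx).clm_apply (hasDerivWithinAt_const t s _) |>.congr_deriv
    (by simp)

end Hessian

section Averages

variable {E : Type*} [NormedAddCommGroup E] [NormedSpace ℝ E] [CompleteSpace E]

lemma inv_smul_intervalIntegral_mem {s : Set E} (hs : Convex ℝ s) (hsc : IsClosed s)
    {f : ℝ → E} {a b : ℝ} (hab : a < b) (hf : ContinuousOn f (Icc a b))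
    (hfs : ∀ u ∈ Icc a b, f u ∈ s) : (b - a)⁻¹ • ∫ u in a..b, f u ∈ s := by
  rw [← interval_average_eq, uIoc_of_le hab.le]
  exact hs.set_average_mem hsc (by simp [hab]) (by simp)
    (MeasureTheory.ae_restrict_of_forall_mem measurableSet_Ioc fun u hu =>
      hfs u (Ioc_subset_Icc_self hu))
    (hf.integrableOn_Icc.mono_set Ioc_subset_Icc_self)

lemma tendsto_inv_smul_intervalIntegral_of_hasDerivWithinAt {f g : ℝ → E}
    (hf : ∀ t, 0 ≤ t → HasDerivWithinAt f (g t) (Ici 0) t) (hg : ContinuousOn g (Ici 0))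
    (hb : Bornology.IsBounded (f '' Ici 0)) :
    Tendsto (fun t => t⁻¹ • ∫ s in (0 : ℝ)..t, g s) atTop (𝓝 0) := by
  obtain ⟨C, hC⟩ := hb.exists_norm_le
  have hFTC : ∀ t, 0 < t → ∫ s in (0 : ℝ)..t, g s = f t - f 0 := fun t ht =>
    intervalIntegral.integral_eq_sub_of_hasDerivAt_of_le ht.le
      (fun s hs => (hf s hs.1).continuousWithinAt.mono Icc_subset_Ici_self)
      (fun s hs => (hf s hs.1.le).hasDerivAt (Ici_mem_nhds hs.1))
      ((hg.mono Icc_subset_Ici_self).intervalIntegrable_of_Icc ht.le)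
  have hbdd : IsBoundedUnder (· ≤ ·) atTop fun t => ‖f t - f 0‖ :=
    isBoundedUnder_of_eventually_le (a := C + C) <| (eventually_ge_atTop 0).mono fun t ht =>
      (norm_sub_le _ _).trans (add_le_add (hC _ (mem_image_of_mem f ht))
        (hC _ (mem_image_of_mem f self_mem_Ici)))
  refine (tendsto_inv_atTop_zero.zero_smul_isBoundedUnder_le hbdd).congr' ?_
  filter_upwards [eventually_gt_atTop 0] with t ht
  rw [hFTC t ht]

end Averages

lemma intSimplex_subset_stdSimplex (A : Type*) [Fintype A] : intSimplex A ⊆ stdSimplex ℝ A :=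
  fun _ hy => ⟨fun γ => (hy.1 γ).le, hy.2⟩

lemma tendsto_infDist_of_isCompact {X Y ι : Type*} [PseudoMetricSpace X] [TopologicalSpace Y]
    [T2Space Y] {l : Filter ι} {K S : Set X} {Φ : X → Y} {y₀ : Y} {f : ι → X}
    (hK : IsCompact K) (hΦ : ContinuousOn Φ K) (hKS : ∀ y ∈ K, Φ y = y₀ → y ∈ S)
    (hfK : ∀ᶠ t in l, f t ∈ K) (hf : Tendsto (fun t => Φ (f t)) l (𝓝 y₀)) :
    Tendsto (fun t => Metric.infDist (f t) S) l (𝓝 0) := by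
  refine Metric.tendsto_nhds.2 fun ε hε => ?_
  -- `Φ` stays away from `y₀` on the compact set of points of `K` that are `ε`-far from `S`.
  set K' := K ∩ {y | ε ≤ Metric.infDist y S}
  have hK' : IsCompact (Φ '' K') :=
    (hK.inter_right (isClosed_le continuous_const (Metric.continuous_infDist_pt S))
      ).image_of_continuousOn (hΦ.mono inter_subset_left)
  have hy₀ : y₀ ∉ Φ '' K' := by
    rintro ⟨y, ⟨hyK, hyε : ε ≤ _⟩, hy⟩
    rw [Metric.infDist_zero_of_mem (hKS y hyK hy)] at hyε
    exact hyε.not_gt hε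
  filter_upwards [hf (hK'.isClosed.isOpen_compl.mem_nhds hy₀), hfK] with t htΦ htK
  rw [Real.dist_eq, sub_zero, abs_of_nonneg Metric.infDist_nonneg]
  exact not_le.1 fun hε' => htΦ ⟨f t, ⟨htK, hε'⟩, rfl⟩

theorem stmt_12_general {A : Type*} [Fintype A] [DecidableEq A]
    (M : Matrix A A ℝ)
    (h : (A → ℝ) → ℝ) (U : Set (A → ℝ)) (hU : IsOpen U) (hXU : stdSimplex ℝ A ⊆ U)
    (hh : ContDiffOn ℝ 2 h U)
    (hpd : ∀ y ∈ intSimplex A, (hessMat h y).PosDef)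
    (V : (A → ℝ) → (A → ℝ))
    (hV : ∀ y ∈ intSimplex A,
      IsGProj (hessMat h y) {z : A → ℝ | (∑ α, z α) = 0}
        ((hessMat h y)⁻¹.mulVec (M.mulVec y)) (V y))
    (x : ℝ → (A → ℝ)) (hxint : ∀ t : ℝ, 0 ≤ t → x t ∈ intSimplex A)
    (hx' : ∀ t : ℝ, 0 ≤ t → HasDerivWithinAt x (V (x t)) (Set.Ici 0) t)
    (K : Set (A → ℝ)) (hK : IsCompact K) (hKint : K ⊆ intSimplex A)
    (hxK : ∀ t : ℝ, 0 ≤ t → x t ∈ K) :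
    Tendsto (fun t : ℝ => Metric.infDist (t⁻¹ • ∫ s in (0:ℝ)..t, x s)
        {xs ∈ stdSimplex ℝ A | ∀ y ∈ stdSimplex ℝ A, M.mulVec xs ⬝ᵥ (y - xs) ≤ 0})
      atTop (nhds 0) := by
  have hint := intSimplex_subset_stdSimplex A
  have hx_cont : ContinuousOn x (Ici 0) := fun t ht => (hx' t ht).continuousWithinAt
  set Φ : (A → ℝ) →L[ℝ] (A × A → ℝ) := (pairDiff A).comp M.mulVecLin.toContinuousLinearMap
  have hderiv : ∀ t, 0 ≤ t →
      HasDerivWithinAt (fun t => pairDiff A (partials h (x t))) (Φ (x t)) (Ici 0) t := by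
    intro t ht
    have hy := hxint t ht
    exact ((pairDiff A).hasFDerivAt.comp_hasDerivWithinAt t <| HasDerivWithinAt.partials
      (hh.contDiffAt (hU.mem_nhds (hXU (hint hy)))) (hx' t ht)).congr_deriv
      ((hV _ hy).pairDiff_mulVec (hpd _ hy))
  have hbdd : Bornology.IsBounded ((fun t => pairDiff A (partials h (x t))) '' Ici 0) := by
    refine (hK.image_of_continuousOn ((pairDiff A).continuous.comp_continuousOn
      ((hh.continuousOn_partials hU).mono fun y hy => hXU (hint (hKint hy))))).isBounded.subset ?_
    rintro _ ⟨t, ht, rfl⟩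
    exact mem_image_of_mem _ (hxK t ht)
  have havg := tendsto_inv_smul_intervalIntegral_of_hasDerivWithinAt hderiv
    (Φ.continuous.comp_continuousOn hx_cont) hbdd
  refine tendsto_infDist_of_isCompact (isCompact_stdSimplex ℝ A) Φ.continuous.continuousOn
    (fun y hy h0 => ⟨hy, fun z hz => (dotProduct_eq_zero_of_pairDiff_eq_zero h0
      (by simp [Finset.sum_sub_distrib, hz.2, hy.2])).le⟩) ?_ (havg.congr' ?_)
  all_goals filter_upwards [eventually_gt_atTop 0] with t ht
  · simpa using inv_smul_intervalIntegral_mem (convex_stdSimplex ℝ A) (isClosed_stdSimplex ℝ A)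
      ht (hx_cont.mono Icc_subset_Ici_self) fun u hu => hint (hxint u hu.1)
  · rw [map_smul, ← Φ.intervalIntegral_comp_comm
      ((hx_cont.mono Icc_subset_Ici_self).intervalIntegrable_of_Icc ht.le)]

/-- convergence of time averages under Hessian dynamics in random matching
games (`v(x) = M x`).  If the interior solution `x'(t) = V(x(t))` stays in a compact subset
of the interior of the simplex, then the time average `x̄(t) = (1/t)∫₀ᵗ x(s) ds` converges to
the set of Nash equilibria. -/
theorem stmt_12 {A : Type*} [Fintype A] [DecidableEq A] [Nonempty A]
    (M : Matrix A A ℝ)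
    (h : (A → ℝ) → ℝ) (U : Set (A → ℝ)) (hU : IsOpen U) (hXU : stdSimplex ℝ A ⊆ U)
    (hh : ContDiffOn ℝ 2 h U)
    (hpd : ∀ y ∈ intSimplex A, (hessMat h y).PosDef)
    (V : (A → ℝ) → (A → ℝ))
    (hV : ∀ y ∈ intSimplex A,
      IsGProj (hessMat h y) {z : A → ℝ | (∑ α, z α) = 0}
        ((hessMat h y)⁻¹.mulVec (M.mulVec y)) (V y))
    (x : ℝ → (A → ℝ)) (hxint : ∀ t : ℝ, 0 ≤ t → x t ∈ intSimplex A)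
    (hx' : ∀ t : ℝ, 0 ≤ t → HasDerivWithinAt x (V (x t)) (Set.Ici 0) t)
    (K : Set (A → ℝ)) (hK : IsCompact K) (hKint : K ⊆ intSimplex A)
    (hxK : ∀ t : ℝ, 0 ≤ t → x t ∈ K) :
    Tendsto (fun t : ℝ => Metric.infDist (t⁻¹ • ∫ s in (0:ℝ)..t, x s)
        {xs ∈ stdSimplex ℝ A | ∀ y ∈ stdSimplex ℝ A, M.mulVec xs ⬝ᵥ (y - xs) ≤ 0})
      atTop (nhds 0) :=
  stmt_12_general M h U hU hXU hh hpd V hV x hxint hx' K hK hKint hxK
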